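/- Let σ, ν, μ be Minkowski velocities and suppose the quantity D := c² − ⟨ν,μ⟩ + 2⟨σ,ν⟩⟨σ,μ⟩/c² is nonzero. Define the Oziewicz–Minkowski inverse velocity ζ := ((⟨σ,ν⟩ + ⟨σ,μ⟩)/D)·(μ − ν) − ((c² − ⟨ν,μ⟩ − 2⟨σ,ν⟩²/c²)/D)·σ, and assume ⟨σ,ζ+σ⟩ ≠ 0. Then the active covariant Lorentz boost with parameter ζ carries ν to μ: La(σ,ζ)ν = μ. -/

import Mathlib

noncomputable section

/-- Minkowski bilinear form on ℝ⁴ with signature +−−−. -/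
def mink (u v : Fin 4 → ℝ) : ℝ := u 0 * v 0 - u 1 * v 1 - u 2 * v 2 - u 3 * v 3

/-- Active covariant Lorentz boost determined by Minkowski velocities σ, ζ. -/
def La (c : ℝ) (σ ζ ν : Fin 4 → ℝ) : Fin 4 → ℝ :=
  ν - (mink ν (ζ + σ) / mink σ (ζ + σ)) • (ζ + σ) + (2 * mink ν σ / c ^ 2) • ζ

/-! The proof idea: writing a = ⟨σ,ν⟩, b = ⟨σ,μ⟩, the definition of D makes ζ + σ a multiple
p • w of w := μ − ν + (2a/c²)σ with p = (a + b)/D. The quotient in the boost does not see the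
scalar p, so La(σ,ζ)ν = ν + p(2a/c² − ⟨ν,w⟩/⟨σ,w⟩) w − (2a/c²)σ, and with ⟨σ,w⟩ = a + b,
⟨ν,w⟩ = ⟨ν,μ⟩ − c² + 2a²/c² the coefficient of w is p · D/(a + b) = 1, leaving exactly μ. -/

lemma mink_comm (u v : Fin 4 → ℝ) : mink u v = mink v u := by
  unfold mink; ring

lemma mink_add_right (u v w : Fin 4 → ℝ) : mink u (v + w) = mink u v + mink u w := by
  simp only [mink, Pi.add_apply]; ring

lemma mink_sub_right (u v w : Fin 4 → ℝ) : mink u (v - w) = mink u v - mink u w := by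
  simp only [mink, Pi.sub_apply]; ring

lemma mink_smul_right (u v : Fin 4 → ℝ) (r : ℝ) : mink u (r • v) = r * mink u v := by
  simp only [mink, Pi.smul_apply, smul_eq_mul]; ring

lemma La_eq_of_add_eq_smul {c p : ℝ} {σ ζ ν w : Fin 4 → ℝ} (h : ζ + σ = p • w) (hp : p ≠ 0) :
    La c σ ζ ν =
      ν + (p * (2 * mink ν σ / c ^ 2 - mink ν w / mink σ w)) • w - (2 * mink ν σ / c ^ 2) • σ := by
  have hζ : ζ = p • w - σ := eq_sub_of_add_eq h
  rw [La, h, mink_smul_right, mink_smul_right, mul_div_mul_left _ _ hp, hζ]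
  module

theorem oziewicz_minkowski_inverse_velocity_general (c : ℝ) (hc : 0 < c)
    (σ ν μ : Fin 4 → ℝ)
    (hσ : mink σ σ = c ^ 2) (hν : mink ν ν = c ^ 2)
    (D : ℝ) (hD : D = c ^ 2 - mink ν μ + 2 * mink σ ν * mink σ μ / c ^ 2)
    (hD0 : D ≠ 0)
    (ζ : Fin 4 → ℝ)
    (hζ : ζ = ((mink σ ν + mink σ μ) / D) • (μ - ν) -
        ((c ^ 2 - mink ν μ - 2 * (mink σ ν) ^ 2 / c ^ 2) / D) • σ)
    (hσζσ : mink σ (ζ + σ) ≠ 0) :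
    La c σ ζ ν = μ := by
  have hc2 : c ^ 2 ≠ 0 := pow_ne_zero _ hc.ne'
  set a := mink σ ν
  set b := mink σ μ
  have hcD : c ^ 2 * D = c ^ 4 - c ^ 2 * mink ν μ + 2 * a * b := by
    rw [hD]; field_simp
  set p := (a + b) / D
  set w := μ - ν + (2 * a / c ^ 2) • σ
  have hq : 1 - (c ^ 2 - mink ν μ - 2 * a ^ 2 / c ^ 2) / D = p * (2 * a / c ^ 2) := by
    simp only [p]; field_simp; linear_combination hcD
  have hζσ : ζ + σ = p • w := by
    rw [hζ]; linear_combination (norm := module) hq • σ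
  have hσw : mink σ w = a + b := by
    simp only [w, mink_add_right, mink_sub_right, mink_smul_right, hσ]; field_simp; ring
  have hνw : mink ν w = mink ν μ - c ^ 2 + 2 * a ^ 2 / c ^ 2 := by
    simp only [w, mink_add_right, mink_sub_right, mink_smul_right, hν, mink_comm ν σ]; ring
  obtain ⟨hp, hab⟩ : p ≠ 0 ∧ a + b ≠ 0 := by
    rwa [hζσ, mink_smul_right, hσw, mul_ne_zero_iff] at hσζσ
  have hcoef : p * (2 * mink ν σ / c ^ 2 - mink ν w / mink σ w) = 1 := by
    rw [hσw, hνw, mink_comm ν σ]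
    simp only [p]; field_simp; linear_combination -hcD
  rw [La_eq_of_add_eq_smul hζσ hp, hcoef, one_smul, mink_comm ν σ]
  module

theorem oziewicz_minkowski_inverse_velocity (c : ℝ) (hc : 0 < c)
    (σ ν μ : Fin 4 → ℝ)
    (hσ : mink σ σ = c ^ 2) (hν : mink ν ν = c ^ 2) (hμ : mink μ μ = c ^ 2)
    (D : ℝ) (hD : D = c ^ 2 - mink ν μ + 2 * mink σ ν * mink σ μ / c ^ 2)
    (hD0 : D ≠ 0)
    (ζ : Fin 4 → ℝ)
    (hζ : ζ = ((mink σ ν + mink σ μ) / D) • (μ - ν) -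
        ((c ^ 2 - mink ν μ - 2 * (mink σ ν) ^ 2 / c ^ 2) / D) • σ)
    (hσζσ : mink σ (ζ + σ) ≠ 0) :
    La c σ ζ ν = μ :=
  oziewicz_minkowski_inverse_velocity_general c hc σ ν μ hσ hν D hD hD0 ζ hζ hσζσ
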